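/- arXiv:math/0702032 — 7 statements merged into one kernel-verified Lean document; each statement's English description precedes it below -/
import Mathlib

section
/- Let V be a real vector space. On L = V ⊕ End(V) ⊕ V*, define a bracket by [(X,A,α),(Y,B,β)] = (A Y − B X, A∘B − B∘A + ⟨X,β⟩ − ⟨Y,α⟩, α∘B − β∘A), where for Z ∈ V and γ ∈ V*, ⟨Z,γ⟩ ∈ End(V) denotes the endomorphism W ↦ γ(Z)W + γ(W)Z. Then this bracket is bilinear, antisymmetric, and satisfies the Jacobi identity; i.e., it makes L into a Lie algebra. -/
open LinearMap

/-- For `Z ∈ V` and `γ ∈ V*`, the endomorphism `⟨Z,γ⟩ : W ↦ γ(Z)•W + γ(W)•Z`. -/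
noncomputable def pairEnd {V : Type*} [AddCommGroup V] [Module ℝ V]
    (Z : V) (γ : V →ₗ[ℝ] ℝ) : Module.End ℝ V :=
  γ Z • LinearMap.id + LinearMap.smulRight γ Z

/-- The bracket on `L = V ⊕ End(V) ⊕ V*`:
`[(X,A,α),(Y,B,β)] = (A Y − B X, A∘B − B∘A + ⟨X,β⟩ − ⟨Y,α⟩, α∘B − β∘A)`. -/
noncomputable def bkt {V : Type*} [AddCommGroup V] [Module ℝ V]
    (p q : V × Module.End ℝ V × (V →ₗ[ℝ] ℝ)) :
    V × Module.End ℝ V × (V →ₗ[ℝ] ℝ) :=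
  (p.2.1 q.1 - q.2.1 p.1,
   p.2.1 * q.2.1 - q.2.1 * p.2.1 + pairEnd p.1 q.2.2 - pairEnd q.1 p.2.2,
   p.2.2 ∘ₗ q.2.1 - q.2.2 ∘ₗ p.2.1)

/-!
Send `(X, A, α)` to the block endomorphism `[[A, X], [α, 0]]` of `V × ℝ`, i.e.
`(v, t) ↦ (A v + t • X, α v)`. The commutator of the images of `(X, A, α)` and `(Y, B, β)` is
the image of their bracket except for the corner entry `α Y - β X`; modulo scalar endomorphisms
that corner is traded for the `(β X - α Y) • id` hidden in `⟨X, β⟩ - ⟨Y, α⟩`. So the bracket is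
the pullback of the Lie bracket of `End(V × ℝ) / ℝ` along a linear map, which is injective
because a block matrix with zero corner is scalar only if it vanishes.
-/

section TransportOfBracket

variable {R M L : Type*} [CommRing R] [AddCommGroup M] [Module R M] [LieRing L] [LieAlgebra R L]
  {b : M → M → M}

theorem smul_add_left_of_injective_lie {Φ : M →ₗ[R] L} (hΦ : Function.Injective Φ)
    (hb : ∀ p q, Φ (b p q) = ⁅Φ p, Φ q⁆) (c : R) (p p' q : M) :
    b (c • p + p') q = c • b p q + b p' q :=
  hΦ <| by simp only [hb, map_add, map_smul, add_lie, smul_lie]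

theorem smul_add_right_of_injective_lie {Φ : M →ₗ[R] L} (hΦ : Function.Injective Φ)
    (hb : ∀ p q, Φ (b p q) = ⁅Φ p, Φ q⁆) (c : R) (p q q' : M) :
    b p (c • q + q') = c • b p q + b p q' :=
  hΦ <| by simp only [hb, map_add, map_smul, lie_add, lie_smul]

end TransportOfBracket

section TransportOfBracketAdditive

variable {M L : Type*} [AddCommGroup M] [LieRing L] {b : M → M → M} {Φ : M →+ L}

theorem antisymm_of_injective_lie (hΦ : Function.Injective Φ)
    (hb : ∀ p q, Φ (b p q) = ⁅Φ p, Φ q⁆) (p q : M) : b p q = - b q p :=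
  hΦ <| by rw [map_neg, hb, hb, lie_skew]

theorem jacobi_of_injective_lie (hΦ : Function.Injective Φ)
    (hb : ∀ p q, Φ (b p q) = ⁅Φ p, Φ q⁆) (p q r : M) :
    b (b p q) r + b (b q r) p + b (b r p) q = 0 :=
  hΦ <| by
    simp only [map_add, map_zero, hb]
    rw [← lie_skew ⁅Φ p, Φ q⁆, ← lie_skew ⁅Φ q, Φ r⁆, ← lie_skew ⁅Φ r, Φ p⁆, ← neg_eq_zero,
      ← lie_jacobi (Φ r) (Φ p) (Φ q)]
    abel

end TransportOfBracketAdditive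

attribute [local instance] LieRing.ofAssociativeRing LieAlgebra.ofAssociativeAlgebra

section Scalars

variable (R W : Type*) [CommRing R] [AddCommGroup W] [Module R W]

def scalarsLieIdeal : LieIdeal R (Module.End R W) where
  toSubmodule := LinearMap.range (Algebra.linearMap R (Module.End R W))
  lie_mem := by
    rintro x _ ⟨c, rfl⟩
    simp [Ring.lie_def, Algebra.commutes]

end Scalars

section BlockMatrix

variable {V : Type*} [AddCommGroup V] [Module ℝ V]

noncomputable def blockEnd : (V × Module.End ℝ V × (V →ₗ[ℝ] ℝ)) →ₗ[ℝ] Module.End ℝ (V × ℝ) where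
  toFun p := (p.2.1.prod p.2.2).coprod (LinearMap.toSpanSingleton ℝ _ (p.1, 0))
  map_add' p q := by ext <;> simp
  map_smul' c p := by ext <;> simp

theorem blockEnd_bkt (p q : V × Module.End ℝ V × (V →ₗ[ℝ] ℝ)) :
    blockEnd (bkt p q) = ⁅blockEnd p, blockEnd q⁆ + algebraMap ℝ _ (q.2.2 p.1 - p.2.2 q.1) := by
  ext <;> simp [blockEnd, bkt, pairEnd, Ring.lie_def]; abel

theorem eq_zero_of_blockEnd_mem_scalarsLieIdeal {p : V × Module.End ℝ V × (V →ₗ[ℝ] ℝ)}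
    (hp : blockEnd p ∈ scalarsLieIdeal ℝ (V × ℝ)) : p = 0 := by
  obtain ⟨c, hc⟩ := hp
  obtain ⟨X, A, α⟩ := p
  obtain ⟨rfl, rfl⟩ : 0 = X ∧ c = 0 := by simpa [blockEnd] using LinearMap.congr_fun hc (0, 1)
  have hv (v : V) : (A v, α v) = 0 := by
    simpa [blockEnd] using (LinearMap.congr_fun hc (v, 0)).symm
  ext v
  exacts [rfl, congrArg Prod.fst (hv v), congrArg Prod.snd (hv v)]

noncomputable def toEndModScalars :
    (V × Module.End ℝ V × (V →ₗ[ℝ] ℝ)) →ₗ[ℝ] Module.End ℝ (V × ℝ) ⧸ scalarsLieIdeal ℝ (V × ℝ) :=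
  (LieSubmodule.Quotient.mk' (scalarsLieIdeal ℝ (V × ℝ)) : _ →ₗ[ℝ] _) ∘ₗ blockEnd

theorem toEndModScalars_injective : Function.Injective (toEndModScalars (V := V)) :=
  (injective_iff_map_eq_zero _).2 fun _ hp ↦
    eq_zero_of_blockEnd_mem_scalarsLieIdeal ((LieSubmodule.Quotient.mk_eq_zero _).1 hp)

theorem toEndModScalars_bkt (p q : V × Module.End ℝ V × (V →ₗ[ℝ] ℝ)) :
    toEndModScalars (bkt p q) = ⁅toEndModScalars p, toEndModScalars q⁆ := by
  have hscalar : (algebraMap ℝ _ (q.2.2 p.1 - p.2.2 q.1) : Module.End ℝ (V × ℝ)) ∈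
      scalarsLieIdeal ℝ (V × ℝ) := ⟨_, rfl⟩
  simp only [toEndModScalars, LinearMap.comp_apply, LieModuleHom.coe_toLinearMap, blockEnd_bkt,
    map_add, (LieSubmodule.Quotient.mk_eq_zero _).2 hscalar, add_zero]
  rfl

end BlockMatrix

/-- The bracket on `L = V ⊕ End(V) ⊕ V*` is bilinear, antisymmetric and satisfies the
Jacobi identity, i.e. it makes `L` into a Lie algebra. -/
theorem bkt_isLieBracket {V : Type*} [AddCommGroup V] [Module ℝ V] :
    (∀ (c : ℝ) (p p' q : V × Module.End ℝ V × (V →ₗ[ℝ] ℝ)),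
        bkt (c • p + p') q = c • bkt p q + bkt p' q) ∧
    (∀ (c : ℝ) (p q q' : V × Module.End ℝ V × (V →ₗ[ℝ] ℝ)),
        bkt p (c • q + q') = c • bkt p q + bkt p q') ∧
    (∀ p q : V × Module.End ℝ V × (V →ₗ[ℝ] ℝ), bkt p q = - bkt q p) ∧
    (∀ p q r : V × Module.End ℝ V × (V →ₗ[ℝ] ℝ),
        bkt (bkt p q) r + bkt (bkt q r) p + bkt (bkt r p) q = 0) :=
  ⟨smul_add_left_of_injective_lie toEndModScalars_injective toEndModScalars_bkt,
    smul_add_right_of_injective_lie toEndModScalars_injective toEndModScalars_bkt,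
    antisymm_of_injective_lie (Φ := toEndModScalars.toAddMonoidHom) toEndModScalars_injective
      toEndModScalars_bkt,
    jacobi_of_injective_lie (Φ := toEndModScalars.toAddMonoidHom) toEndModScalars_injective
      toEndModScalars_bkt⟩
end

section
/- Let V be a finite-dimensional real vector space. The Lie algebra L = V ⊕ End(V) ⊕ V* with bracket [(X,A,α),(Y,B,β)] = (A Y − B X, A∘B − B∘A + ⟨X,β⟩ − ⟨Y,α⟩, α∘B − β∘A), where ⟨Z,γ⟩ ∈ End(V) is the endomorphism W ↦ γ(Z)W + γ(W)Z, is isomorphic as a Lie algebra to the Lie algebra of trace-zero endomorphisms of ℝ × V (with the commutator bracket). -/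
/-!
Send `(X, A, α)` to the block endomorphism `[[c, α], [X, A + c]]` of `ℝ × V`, where
`c = -tr A / (dim V + 1)` is the scalar shift that makes the trace vanish. This is a linear
bijection onto `sl(ℝ × V)`: the inverse reads `X` and `α` off the first column and row and
recovers `A` as the lower-right block minus the upper-left entry. The bracket goes to the
commutator because `tr ⟨Z, γ⟩ = (dim V + 1) γ(Z)` makes the shift of `bkt p q` equal to
`α(Y) - β(X)`, and the pairings `⟨X, β⟩ - ⟨Y, α⟩` then supply exactly the rank-one terms
`β(·) X - α(·) Y` of the commutator of the two block matrices.
-/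

open LinearMap

open Module

namespace LinearMap

variable {R M N : Type*} [CommRing R] [AddCommGroup M] [Module R M] [AddCommGroup N] [Module R N]
  [Module.Free R M] [Module.Finite R M] [Module.Free R N] [Module.Finite R N]

theorem trace_prod_eq_add (f : Module.End R (M × N)) :
    trace R (M × N) f = trace R M (fst R M N ∘ₗ f ∘ₗ inl R M N) +
      trace R N (snd R M N ∘ₗ f ∘ₗ inr R M N) := by
  have hf : f = inl R M N ∘ₗ (fst R M N ∘ₗ f) + inr R M N ∘ₗ (snd R M N ∘ₗ f) := by
    ext x <;> simp
  conv_lhs => rw [hf]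
  rw [map_add, trace_comp_comm' _ (inl R M N), trace_comp_comm' _ (inr R M N), comp_assoc,
    comp_assoc]

theorem trace_self_eq_apply_one (f : Module.End R R) : trace R R f = f 1 := by
  have hf : f = (LinearMap.id : R →ₗ[R] R).smulRight (f 1) := by ext; simp
  conv_lhs => rw [hf]
  rw [trace_smulRight, id_apply]

end LinearMap

theorem trace_pairEnd {V : Type*} [AddCommGroup V] [Module ℝ V] [FiniteDimensional ℝ V]
    (Z : V) (γ : V →ₗ[ℝ] ℝ) :
    trace ℝ V (pairEnd Z γ) = (finrank ℝ V + 1) * γ Z := by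
  simp only [pairEnd, map_add, map_smul, trace_id, smul_eq_mul, trace_smulRight]
  ring

noncomputable section

namespace BlockSl

section Field

variable {K V : Type*} [Field K] [AddCommGroup V] [Module K V]

variable (K V) in
def traceShift : Module.End K V →ₗ[K] K := -(finrank K V + 1 : K)⁻¹ • trace K V

theorem traceShift_apply (A : Module.End K V) :
    traceShift K V A = -trace K V A / (finrank K V + 1) := by
  simp [traceShift, div_eq_inv_mul]

variable (K V) in
def toBlock : (V × Module.End K V × (V →ₗ[K] K)) →ₗ[K] Module.End K (K × V) where
  toFun p := ((traceShift K V p.2.1) • fst K K V + p.2.2 ∘ₗ snd K K V).prod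
    ((fst K K V).smulRight p.1 + (p.2.1 + traceShift K V p.2.1 • LinearMap.id) ∘ₗ snd K K V)
  map_add' p q := by ext <;> simp; module
  map_smul' r p := by ext <;> simp; module

@[simp]
theorem toBlock_apply (p : V × Module.End K V × (V →ₗ[K] K)) (t : K) (v : V) :
    toBlock K V p (t, v) = (traceShift K V p.2.1 * t + p.2.2 v,
      t • p.1 + p.2.1 v + traceShift K V p.2.1 • v) := by
  simp [toBlock, add_assoc]

variable (K V) in
def ofBlock : Module.End K (K × V) →ₗ[K] V × Module.End K V × (V →ₗ[K] K) where
  toFun M := ((M (1, 0)).2, snd K K V ∘ₗ M ∘ₗ inr K K V - (M (1, 0)).1 • LinearMap.id,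
    fst K K V ∘ₗ M ∘ₗ inr K K V)
  map_add' M N := by ext <;> simp [add_smul]; abel
  map_smul' r M := by ext <;> simp [mul_smul, smul_sub]

theorem ofBlock_toBlock (p : V × Module.End K V × (V →ₗ[K] K)) :
    ofBlock K V (toBlock K V p) = p := by
  ext <;> simp [ofBlock]

variable [CharZero K] [FiniteDimensional K V]

theorem trace_toBlock (p : V × Module.End K V × (V →ₗ[K] K)) :
    trace K (K × V) (toBlock K V p) = 0 := by
  rw [trace_prod_eq_add, trace_self_eq_apply_one]
  have hA : snd K K V ∘ₗ toBlock K V p ∘ₗ inr K K V =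
      p.2.1 + traceShift K V p.2.1 • LinearMap.id := by
    ext; simp
  simp only [coe_comp, Function.comp_apply, coe_inl, coe_fst, toBlock_apply, map_zero, mul_one,
    add_zero, hA, traceShift_apply, map_add, map_smul, trace_id, smul_eq_mul]
  field_simp
  ring

theorem toBlock_ofBlock {M : Module.End K (K × V)} (hM : trace K (K × V) M = 0) :
    toBlock K V (ofBlock K V M) = M := by
  have hc : traceShift K V (ofBlock K V M).2.1 = (M (1, 0)).1 := by
    rw [trace_prod_eq_add, trace_self_eq_apply_one] at hM
    simp only [coe_comp, Function.comp_apply, coe_inl, coe_fst] at hM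
    simp only [ofBlock, coe_mk, AddHom.coe_mk, traceShift_apply, map_sub, map_smul, trace_id,
      smul_eq_mul]
    field_simp
    linear_combination -hM
  refine LinearMap.ext fun ⟨t, v⟩ => ?_
  have hx : ((t, v) : K × V) = t • ((1 : K), (0 : V)) + ((0 : K), v) := by simp
  conv_rhs => rw [hx, map_add, map_smul]
  rw [toBlock_apply, hc]
  ext
  · simp [ofBlock, mul_comm]
  · simp [ofBlock, add_assoc]

variable (K V) in
def slEquiv : (V × Module.End K V × (V →ₗ[K] K)) ≃ₗ[K] ker (trace K (K × V)) :=
  LinearEquiv.ofLinearMap ((toBlock K V).codRestrict _ trace_toBlock)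
    (ofBlock K V ∘ₗ (ker (trace K (K × V))).subtype)
    (LinearMap.ext fun M => Subtype.ext (toBlock_ofBlock M.2))
    (LinearMap.ext ofBlock_toBlock)

end Field

section Real

variable {V : Type*} [AddCommGroup V] [Module ℝ V] [FiniteDimensional ℝ V]

theorem traceShift_bkt (p q : V × Module.End ℝ V × (V →ₗ[ℝ] ℝ)) :
    traceShift ℝ V (bkt p q).2.1 = p.2.2 q.1 - q.2.2 p.1 := by
  simp only [bkt, traceShift_apply, map_sub, map_add, trace_pairEnd, trace_mul_comm]
  field_simp
  ring

theorem toBlock_bkt (p q : V × Module.End ℝ V × (V →ₗ[ℝ] ℝ)) :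
    toBlock ℝ V (bkt p q) =
      toBlock ℝ V p * toBlock ℝ V q - toBlock ℝ V q * toBlock ℝ V p := by
  refine LinearMap.ext fun ⟨t, v⟩ => ?_
  simp only [LinearMap.sub_apply, Module.End.mul_apply, toBlock_apply, traceShift_bkt]
  ext
  · simp only [bkt, LinearMap.sub_apply, coe_comp, Function.comp_apply, map_add, map_smul,
      smul_eq_mul, Prod.fst_sub]
    ring
  · simp only [bkt, pairEnd, LinearMap.sub_apply, LinearMap.add_apply, Module.End.mul_apply,
      LinearMap.smul_apply, id_apply, coe_smulRight, map_add, map_smul, smul_eq_mul, Prod.snd_sub]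
    module

end Real

end BlockSl

end

/-- The Lie algebra `L = V ⊕ End(V) ⊕ V*` is isomorphic to the Lie algebra of trace-zero
endomorphisms of `ℝ × V` with the commutator bracket: there is a linear equivalence onto
`sl(ℝ × V) = ker(trace)` carrying `bkt` to the commutator. -/
theorem bkt_iso_sl {V : Type*} [AddCommGroup V] [Module ℝ V] [FiniteDimensional ℝ V] :
    ∃ e : (V × Module.End ℝ V × (V →ₗ[ℝ] ℝ)) ≃ₗ[ℝ]
        LinearMap.ker (LinearMap.trace ℝ (ℝ × V)),
      ∀ p q : V × Module.End ℝ V × (V →ₗ[ℝ] ℝ),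
        (e (bkt p q) : Module.End ℝ (ℝ × V)) =
          (e p : Module.End ℝ (ℝ × V)) * (e q : Module.End ℝ (ℝ × V)) -
          (e q : Module.End ℝ (ℝ × V)) * (e p : Module.End ℝ (ℝ × V)) :=
  ⟨BlockSl.slEquiv ℝ V, BlockSl.toBlock_bkt⟩
end

section
/- Let V be a real vector space of finite dimension n ≥ 2 and T : V × V → V an alternating bilinear map. Then T decomposes uniquely as T = T₁ + T₂ where T₁ is an alternating bilinear map with Tr(Y ↦ T₁(X,Y)) = 0 for all X ∈ V, and T₂(X,Y) = α(X)Y − α(Y)X for some α ∈ V*; moreover necessarily α(X) = (1/(n−1))·Tr(Y ↦ T(X,Y)). -/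
open LinearMap Module

/-! Tracing `Y ↦ α(X)Y − α(Y)X` gives `n·α(X) − α(X) = (n − 1)α(X)`, so a decomposition
`T = T₁ + T₂` with `T₁` trace-free forces `Tr(T X) = (n − 1)α(X)`. When `n − 1` is invertible
this determines `α`, hence `T₁ = T − T₂`; conversely that choice of `α` makes `T − T₂`
trace-free. -/

section VectorialTorsion

variable {R V : Type*} [CommRing R] [AddCommGroup V] [Module R V]

def vectorialTorsion (α : Dual R V) : V →ₗ[R] V →ₗ[R] V :=
  mk₂ R (fun X Y => α X • Y - α Y • X)
    (fun X X' Y => by simp only [map_add, add_smul, smul_add]; abel)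
    (fun c X Y => by simp only [map_smul, smul_eq_mul, smul_sub, smul_smul, mul_comm])
    (fun X Y Y' => by simp only [map_add, add_smul, smul_add]; abel)
    (fun c X Y => by simp only [map_smul, smul_eq_mul, smul_sub, smul_smul, mul_comm])

@[simp]
theorem vectorialTorsion_apply (α : Dual R V) (X Y : V) :
    vectorialTorsion α X Y = α X • Y - α Y • X :=
  rfl

theorem vectorialTorsion_self (α : Dual R V) (X : V) : vectorialTorsion α X X = 0 := by
  simp

theorem eq_add_vectorialTorsion_iff {T T₁ : V →ₗ[R] V →ₗ[R] V} {α : Dual R V} :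
    T = T₁ + vectorialTorsion α ↔ ∀ X Y, T X Y = T₁ X Y + α X • Y - α Y • X := by
  simp only [LinearMap.ext_iff, LinearMap.add_apply, vectorialTorsion_apply, add_sub_assoc]

theorem trace_vectorialTorsion [Module.Free R V] [Module.Finite R V] (α : Dual R V) (X : V) :
    trace R V (vectorialTorsion α X) = ((finrank R V : R) - 1) * α X := by
  have h : vectorialTorsion α X = α X • LinearMap.id - α.smulRight X := by
    ext Y
    simp
  rw [h, map_sub, map_smul, trace_id, trace_smulRight, smul_eq_mul]
  ring

end VectorialTorsion

section Decomposition

variable {K V : Type*} [Field K] [AddCommGroup V] [Module K V]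

noncomputable def vectorialPart (T : V →ₗ[K] V →ₗ[K] V) : Dual K V :=
  ((finrank K V : K) - 1)⁻¹ • (trace K V ∘ₗ T)

theorem vectorialPart_apply (T : V →ₗ[K] V →ₗ[K] V) (X : V) :
    vectorialPart T X = ((finrank K V : K) - 1)⁻¹ * trace K V (T X) :=
  rfl

variable [FiniteDimensional K V] {T : V →ₗ[K] V →ₗ[K] V} (hV : (finrank K V : K) - 1 ≠ 0)
include hV

theorem trace_sub_vectorialTorsion_vectorialPart (X : V) :
    trace K V ((T - vectorialTorsion (vectorialPart T)) X) = 0 := by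
  rw [LinearMap.sub_apply, map_sub, trace_vectorialTorsion, vectorialPart_apply,
    mul_inv_cancel_left₀ hV, sub_self]

theorem eq_vectorialPart_of_eq_add_vectorialTorsion {T₁ : V →ₗ[K] V →ₗ[K] V} {α : Dual K V}
    (htr : ∀ X, trace K V (T₁ X) = 0) (h : T = T₁ + vectorialTorsion α) :
    α = vectorialPart T := by
  ext X
  rw [vectorialPart_apply, h, LinearMap.add_apply, map_add, htr, zero_add, trace_vectorialTorsion,
    inv_mul_cancel_left₀ hV]

end Decomposition

/-- An alternating bilinear map `T : V × V → V` (a torsion-type tensor) on an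
`n`-dimensional space, `n ≥ 2`, decomposes uniquely as `T = T₁ + T₂` with `T₁`
alternating and trace-free and `T₂(X,Y) = α(X)Y − α(Y)X` for some `α ∈ V*`;
necessarily `α(X) = (1/(n−1))·Tr(Y ↦ T(X,Y))`. -/
theorem torsion_decomposition {V : Type*} [AddCommGroup V] [Module ℝ V]
    [FiniteDimensional ℝ V]
    (n : ℕ) (hn : n = Module.finrank ℝ V) (hn2 : 2 ≤ n)
    (T : V →ₗ[ℝ] V →ₗ[ℝ] V)
    (halt : ∀ X : V, T X X = 0) :
    (∃! Tα : (V →ₗ[ℝ] V →ₗ[ℝ] V) × (V →ₗ[ℝ] ℝ),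
        (∀ X : V, Tα.1 X X = 0) ∧
        (∀ X : V, LinearMap.trace ℝ V (Tα.1 X) = 0) ∧
        (∀ X Y : V, T X Y = Tα.1 X Y + Tα.2 X • Y - Tα.2 Y • X)) ∧
    (∀ (T₁ : V →ₗ[ℝ] V →ₗ[ℝ] V) (α : V →ₗ[ℝ] ℝ),
        (∀ X : V, T₁ X X = 0) →
        (∀ X : V, LinearMap.trace ℝ V (T₁ X) = 0) →
        (∀ X Y : V, T X Y = T₁ X Y + α X • Y - α Y • X) →
        ∀ X : V, α X = (1 / ((n : ℝ) - 1)) * LinearMap.trace ℝ V (T X)) := by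
  subst hn
  have hV : (finrank ℝ V : ℝ) - 1 ≠ 0 := by
    have : (2 : ℝ) ≤ finrank ℝ V := by exact_mod_cast hn2
    linarith
  refine ⟨⟨(T - vectorialTorsion (vectorialPart T), vectorialPart T), ⟨?_, ?_, ?_⟩, ?_⟩, ?_⟩
  · intro X
    rw [LinearMap.sub_apply, LinearMap.sub_apply, halt, vectorialTorsion_self, sub_zero]
  · exact trace_sub_vectorialTorsion_vectorialPart hV
  · exact eq_add_vectorialTorsion_iff.mp (sub_add_cancel _ _).symm
  · rintro ⟨T₁, α⟩ ⟨-, htr, hdec⟩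
    have hT : T = T₁ + vectorialTorsion α := eq_add_vectorialTorsion_iff.mpr hdec
    have hα := eq_vectorialPart_of_eq_add_vectorialTorsion hV htr hT
    exact Prod.ext (eq_sub_of_add_eq (hα ▸ hT.symm)) hα
  · intro T₁ α _ htr hdec X
    rw [eq_vectorialPart_of_eq_add_vectorialTorsion hV htr (eq_add_vectorialTorsion_iff.mpr hdec),
      vectorialPart_apply, one_div]
end

section
/- Let V be a complex vector space and j ∈ End(V) with j∘j = −Id. Let D_j be the operator on bilinear maps A : V × V → V defined by (D_j A)(X,Y) = j(A(X,Y)) − A(jX,Y) − A(X,jY). Then (D_j² + 1)(D_j² + 9) = 0, i.e. D_j⁴(A) + 10·D_j²(A) + 9·A = 0 for every bilinear map A : V × V → V. (Equivalently, the only possible eigenvalues of D_j on such maps are ±i and ±3i.) -/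
open LinearMap Module

/-- The derivation action `D_j` of `j` on `V`-valued bilinear maps:
`(D_j A)(X,Y) = j(A(X,Y)) − A(jX,Y) − A(X,jY)`. -/
noncomputable def DjBil {V : Type*} [AddCommGroup V] [Module ℂ V]
    (j : Module.End ℂ V) (A : V →ₗ[ℂ] V →ₗ[ℂ] V) : V →ₗ[ℂ] V →ₗ[ℂ] V :=
  A.compr₂ j - A.compl₁₂ j LinearMap.id - A.compl₁₂ LinearMap.id j

/-- If `j² = −Id` then `(D_j² + 1)(D_j² + 9) = 0` on `V`-valued bilinear maps: the only
possible eigenvalues of `D_j` on such maps are `±i` and `±3i`. -/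
theorem DjBil_quartic {V : Type*} [AddCommGroup V] [Module ℂ V]
    (j : Module.End ℂ V) (hj : j * j = -1) :
    ∀ A : V →ₗ[ℂ] V →ₗ[ℂ] V,
      DjBil j (DjBil j (DjBil j (DjBil j A))) + (10 : ℂ) • DjBil j (DjBil j A)
        + (9 : ℂ) • A = 0 := by
  have h : ∀ v : V, j (j v) = -v := fun v => by
    have := congrArg (fun f : Module.End ℂ V => f v) hj
    simpa using this
  intro A
  ext X Y
  simp only [DjBil, LinearMap.sub_apply, LinearMap.add_apply, LinearMap.smul_apply,
    LinearMap.neg_apply, compr₂_apply, compl₁₂_apply, LinearMap.id_apply,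
    LinearMap.zero_apply, map_sub, map_neg, map_add, h]
  module
end

section
/- Let V be a finite-dimensional complex vector space, j ∈ End(V) with j∘j = −Id, and T : V × V → V an alternating bilinear map. Define the trace contraction T̂ ∈ V* by T̂(X) = Tr(Y ↦ T(X,Y)) and let (D_j T)(X,Y) = j(T(X,Y)) − T(jX,Y) − T(X,jY). Then the trace contraction of D_j T satisfies (D_j T)^(X) = −T̂(jX) for all X; consequently, if D_j T = 3i·T, then T̂ = 0, i.e. Tr(Y ↦ T(X,Y)) = 0 for all X ∈ V. -/
/-
For fixed `X`, the endomorphism `Y ↦ (D_j T)(X,Y)` is the commutator `[j, T X]`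
minus `T (jX)`, and commutators are traceless; this gives `(D_j T)^ = −T̂ ∘ j`. If
`D_j T = 3i·T`, the functional `T̂` then satisfies `T̂ ∘ j = −3i·T̂`, so applying this twice
and using `j² = −1` yields `−T̂ = −9·T̂`, i.e. `T̂ = 0`.
-/

open LinearMap Module

section DjBil

variable {V : Type*} [AddCommGroup V] [Module ℂ V]

theorem DjBil_apply (j : Module.End ℂ V) (A : V →ₗ[ℂ] V →ₗ[ℂ] V) (X : V) :
    DjBil j A X = j * A X - A (j X) - A X * j := by
  ext Y
  simp [DjBil, Module.End.mul_apply]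

theorem trace_DjBil_apply (j : Module.End ℂ V) (A : V →ₗ[ℂ] V →ₗ[ℂ] V) (X : V) :
    trace ℂ V (DjBil j A X) = -trace ℂ V (A (j X)) := by
  rw [DjBil_apply, map_sub, map_sub, trace_mul_comm]
  ring

end DjBil

theorem LinearMap.eq_zero_of_comp_eq_smul_of_mul_self_eq_neg_one {K V : Type*} [Field K]
    [AddCommGroup V] [Module K V] {j : Module.End K V} (hj : j * j = -1)
    {φ : V →ₗ[K] K} {c : K} (hφ : φ ∘ₗ j = c • φ) (hc : c ^ 2 ≠ -1) : φ = 0 := by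
  ext X
  have hφ' (Y : V) : φ (j Y) = c * φ Y := LinearMap.congr_fun hφ Y
  have hjj : φ (j (j X)) = c ^ 2 * φ X := by
    rw [hφ', hφ']
    ring
  have hneg : φ (j (j X)) = -φ X := by
    rw [← Module.End.mul_apply, hj]
    simp
  have : (c ^ 2 + 1) * φ X = 0 := by linear_combination hjj.symm.trans hneg
  exact (mul_eq_zero.mp this).resolve_left fun h => hc (eq_neg_of_add_eq_zero_left h)

theorem torsion_trace_DjBil_general {V : Type*} [AddCommGroup V] [Module ℂ V]
    (j : Module.End ℂ V) (hj : j * j = -1)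
    (T : V →ₗ[ℂ] V →ₗ[ℂ] V) :
    (∀ X : V, LinearMap.trace ℂ V (DjBil j T X) = - LinearMap.trace ℂ V (T (j X))) ∧
    (DjBil j T = (3 * Complex.I) • T → ∀ X : V, LinearMap.trace ℂ V (T X) = 0) := by
  refine ⟨trace_DjBil_apply j T, fun hT X => ?_⟩
  have hcomp : (trace ℂ V ∘ₗ T) ∘ₗ j = (-(3 * Complex.I)) • (trace ℂ V ∘ₗ T) := by
    ext Y
    have := trace_DjBil_apply j T Y
    rw [hT] at this
    simp only [comp_apply, LinearMap.smul_apply, map_smul, smul_eq_mul] at this ⊢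
    linear_combination this
  have hc : (-(3 * Complex.I)) ^ 2 ≠ -1 := by
    rw [neg_sq, mul_pow, Complex.I_sq]
    norm_num
  exact LinearMap.congr_fun
    (eq_zero_of_comp_eq_smul_of_mul_self_eq_neg_one hj hcomp hc) X

/-- For `j² = −Id` and an alternating bilinear `T : V × V → V` with trace contraction
`T̂(X) = Tr(Y ↦ T(X,Y))`, the trace contraction of `D_j T` is `X ↦ −T̂(jX)`;
consequently, if `D_j T = 3i·T` then `T̂ = 0`. -/
theorem torsion_trace_DjBil {V : Type*} [AddCommGroup V] [Module ℂ V]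
    [FiniteDimensional ℂ V]
    (j : Module.End ℂ V) (hj : j * j = -1)
    (T : V →ₗ[ℂ] V →ₗ[ℂ] V) (halt : ∀ X : V, T X X = 0) :
    (∀ X : V, LinearMap.trace ℂ V (DjBil j T X) = - LinearMap.trace ℂ V (T (j X))) ∧
    (DjBil j T = (3 * Complex.I) • T → ∀ X : V, LinearMap.trace ℂ V (T X) = 0) :=
  torsion_trace_DjBil_general j hj T
end

section
/- Let V be a complex vector space and j ∈ End(V) with j∘j = −Id. For a bilinear map A : V × V → V define P(A)(X,Y) = (j + i)(A((j − i)X, (j − i)Y)) and (D_j A)(X,Y) = j(A(X,Y)) − A(jX,Y) − A(X,jY). Then: (i) D_j(P(A)) = 3i·P(A) for every bilinear A; and (ii) if D_j A = 3i·A then P(A) = −8i·A. In particular, (−1/(8i))·P is a projection operator onto the 3i-eigenspace of D_j. -/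
open LinearMap Module

/-- The operator `P : A ↦ ((X,Y) ↦ (j + i)(A((j − i)X, (j − i)Y)))`. -/
noncomputable def Pop {V : Type*} [AddCommGroup V] [Module ℂ V]
    (j : Module.End ℂ V) (A : V →ₗ[ℂ] V →ₗ[ℂ] V) : V →ₗ[ℂ] V →ₗ[ℂ] V :=
  (A.compl₁₂ (j - Complex.I • LinearMap.id) (j - Complex.I • LinearMap.id)).compr₂
    (j + Complex.I • LinearMap.id)

/-- For `j² = −Id`: (i) `D_j(P(A)) = 3i·P(A)` for every bilinear `A`, and (ii) if
`D_j A = 3i·A` then `P(A) = −8i·A`; hence `(−1/(8i))·P` is a projection onto the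
`3i`-eigenspace of `D_j`. -/
theorem Pop_projection {V : Type*} [AddCommGroup V] [Module ℂ V]
    (j : Module.End ℂ V) (hj : j * j = -1) :
    (∀ A : V →ₗ[ℂ] V →ₗ[ℂ] V, DjBil j (Pop j A) = (3 * Complex.I) • Pop j A) ∧
    (∀ A : V →ₗ[ℂ] V →ₗ[ℂ] V, DjBil j A = (3 * Complex.I) • A →
      Pop j A = (-8 * Complex.I) • A) := by
  have hj' : ∀ v : V, j (j v) = -v := by
    intro v
    have h := LinearMap.ext_iff.mp hj v
    simpa [Module.End.mul_apply] using h
  have hI2 : Complex.I ^ 2 = -1 := Complex.I_sq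
  have hI3 : Complex.I ^ 3 = -Complex.I := by
    rw [pow_succ, Complex.I_sq]; ring
  -- if j v = 3i • v then v = 0
  have hzero : ∀ v : V, j v = (3 * Complex.I) • v → v = 0 := by
    intro v hv
    have h1 : -v = ((3 * Complex.I) * (3 * Complex.I)) • v := by
      rw [← smul_smul, ← hv, ← map_smul, ← hv, hj']
    have h2 : (3 * Complex.I) * (3 * Complex.I) = -9 := by
      have := Complex.I_mul_I
      ring_nf
      rw [Complex.I_sq]; ring
    rw [h2] at h1
    have h1' : (-9 : ℂ) • v = -v := h1.symm
    have h3 : (8 : ℂ) • v = 0 := by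
      calc (8 : ℂ) • v = -((-9 : ℂ) • v) - v := by module
      _ = -(-v) - v := by rw [h1']
      _ = 0 := by module
    have h4 : v = (8 : ℂ)⁻¹ • ((8 : ℂ) • v) := by rw [smul_smul]; norm_num
    rw [h4, h3, smul_zero]
  constructor
  · intro A
    ext X Y
    simp only [DjBil, Pop, LinearMap.sub_apply, LinearMap.compr₂_apply,
      LinearMap.compl₁₂_apply, LinearMap.add_apply, LinearMap.smul_apply,
      LinearMap.id_apply, LinearMap.id_coe, id_eq]
    have key2 : ∀ v : V, j (j v) - Complex.I • (j v)
        = (-Complex.I) • (j v - Complex.I • v) := by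
      intro v
      rw [hj', smul_sub, smul_smul]
      simp [Complex.I_mul_I]
      module
    rw [key2 X, key2 Y]
    simp only [map_smul, map_neg, map_add, LinearMap.smul_apply, LinearMap.neg_apply,
      hj', smul_smul, smul_add, smul_neg]
    match_scalars <;> (ring_nf; try simp only [hI2, hI3]; try ring_nf; try norm_num)
  · intro A hA
    have hcancel : ∀ (r : ℂ), r ≠ 0 → ∀ v w : V, r • v = r • w → v = w := by
      intro r hr v w h
      have hv : v = r⁻¹ • (r • v) := by rw [smul_smul, inv_mul_cancel₀ hr, one_smul]
      rw [hv, h, smul_smul, inv_mul_cancel₀ hr, one_smul]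
    have hA' : ∀ X Y : V, j (A X Y) - A (j X) Y - A X (j Y)
        = (3 * Complex.I) • A X Y := by
      intro X Y
      have h := LinearMap.congr_fun (LinearMap.congr_fun hA X) Y
      simpa [DjBil] using h
    ext X Y
    have e1 := hA' X Y
    have e2 := hA' (j X) Y
    have e3 := hA' X (j Y)
    have e4 := hA' (j X) (j Y)
    have hXX : A (j (j X)) Y = -(A X Y) := by
      rw [hj']; simp
    have hYY : A X (j (j Y)) = -(A X Y) := by
      rw [hj']; simp
    have hXc : A (j (j X)) (j Y) = -(A X (j Y)) := by
      rw [hj']; simp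
    have hYb : A (j X) (j (j Y)) = -(A (j X) Y) := by
      rw [hj']; simp
    rw [hXX] at e2
    rw [hYY] at e3
    rw [hXc, hYb] at e4
    have hbc : A X (j Y) = A (j X) Y := by
      have h : j (A X (j Y) - A (j X) Y)
          = (3 * Complex.I) • (A X (j Y) - A (j X) Y) := by
        rw [map_sub]
        linear_combination (norm := module) e3 - e2
      exact sub_eq_zero.mp (hzero _ h)
    have had : A (j X) (j Y) = -(A X Y) := by
      have h : j (A X Y + A (j X) (j Y))
          = (3 * Complex.I) • (A X Y + A (j X) (j Y)) := by
        rw [map_add]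
        linear_combination (norm := module) e1 + e4
      exact eq_neg_of_add_eq_zero_right (hzero _ h)
    rw [had] at e2
    rw [hbc] at e1
    have hjb : j (A (j X) Y) = (3 * Complex.I) • A (j X) Y - (2 : ℂ) • A X Y := by
      linear_combination (norm := module) e2
    have hja : j (A X Y) = (3 * Complex.I) • A X Y + (2 : ℂ) • A (j X) Y := by
      linear_combination (norm := module) e1
    have hIb : j ((3 * Complex.I) • A (j X) Y - (2 : ℂ) • A X Y) = -(A (j X) Y) := by
      rw [← hjb, hj']
    rw [map_sub, map_smul, map_smul, hjb, hja] at hIb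
    have hIb2 : (-13 : ℂ) • A (j X) Y - (12 * Complex.I) • A X Y = -(A (j X) Y) := by
      rw [← hIb]
      match_scalars <;> (ring_nf; try simp only [hI2, hI3]; try ring_nf; try norm_num)
    have hb : A (j X) Y = -Complex.I • A X Y := by
      apply hcancel 12 (by norm_num)
      linear_combination (norm := module) -hIb2
    have hja2 : j (A X Y) = Complex.I • A X Y := by
      rw [hja, hb]
      match_scalars <;> (ring_nf; try simp only [hI2, hI3]; try ring_nf; try norm_num)
    simp only [Pop, LinearMap.compr₂_apply, LinearMap.compl₁₂_apply,
      LinearMap.sub_apply, LinearMap.add_apply, LinearMap.smul_apply,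
      LinearMap.id_apply, map_sub, map_smul]
    rw [had, hbc, hb]
    simp only [map_neg, map_smul, hja2, smul_neg, smul_smul, neg_smul]
    match_scalars <;> (ring_nf; try simp only [hI2, hI3]; try ring_nf; try norm_num)
end

section
/- Let V be a real vector space of even finite dimension n = 2m ≥ 2 and let A : V × V → V be a symmetric bilinear map. Suppose that for every j ∈ End(V) with j∘j = −Id, the complex-bilinear extension A_ℂ of A to the complexification V_ℂ = V ⊗ ℝ ℂ satisfies (j_ℂ + i)(A_ℂ((j_ℂ − i)X, (j_ℂ − i)Y)) = 0 for all X,Y ∈ V_ℂ, where j_ℂ is the complex-linear extension of j. Then there exists α ∈ V* such that A(X,Y) = α(X)Y + α(Y)X for all X,Y ∈ V. (This is the algebraic content of the statement that two torsion-free connections inducing the same twistor almost complex structure are projectively equivalent.) -/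
set_option maxRecDepth 10000
set_option maxHeartbeats 1000000

open LinearMap Module TensorProduct

section TwistorHelpers

variable {V : Type*} [AddCommGroup V] [Module ℝ V]

noncomputable def reT (V : Type*) [AddCommGroup V] [Module ℝ V] : (ℂ ⊗[ℝ] V) →ₗ[ℝ] V :=
  TensorProduct.lift ((LinearMap.lsmul ℝ V).comp Complex.reLm)

noncomputable def imT (V : Type*) [AddCommGroup V] [Module ℝ V] : (ℂ ⊗[ℝ] V) →ₗ[ℝ] V :=
  TensorProduct.lift ((LinearMap.lsmul ℝ V).comp Complex.imLm)

@[simp] lemma reT_tmul (c : ℂ) (v : V) : reT V (c ⊗ₜ v) = c.re • v := rfl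
@[simp] lemma imT_tmul (c : ℂ) (v : V) : imT V (c ⊗ₜ v) = c.im • v := rfl

lemma key_identity (A : V →ₗ[ℝ] V →ₗ[ℝ] V)
    (h : ∀ j : Module.End ℝ V, j * j = -1 →
      ∀ B : (ℂ ⊗[ℝ] V) →ₗ[ℂ] (ℂ ⊗[ℝ] V) →ₗ[ℂ] (ℂ ⊗[ℝ] V),
        (∀ x y : V, B (1 ⊗ₜ x) (1 ⊗ₜ y) = 1 ⊗ₜ (A x y)) →
        ∀ X Y : ℂ ⊗[ℝ] V,
          (j.baseChange ℂ + Complex.I • (LinearMap.id : (ℂ ⊗[ℝ] V) →ₗ[ℂ] (ℂ ⊗[ℝ] V)))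
            (B ((j.baseChange ℂ - Complex.I • (LinearMap.id : (ℂ ⊗[ℝ] V) →ₗ[ℂ] (ℂ ⊗[ℝ] V))) X)
               ((j.baseChange ℂ - Complex.I • (LinearMap.id : (ℂ ⊗[ℝ] V) →ₗ[ℂ] (ℂ ⊗[ℝ] V))) Y)) = 0) :
    ∀ j : Module.End ℝ V, j * j = -1 → ∀ x y : V,
      A (j x) (j y) - A x y = j (A (j x) y + A x (j y)) := by
  intro j hj x y
  set B : (ℂ ⊗[ℝ] V) →ₗ[ℂ] (ℂ ⊗[ℝ] V) →ₗ[ℂ] (ℂ ⊗[ℝ] V) :=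
    LinearMap.liftBaseChange ℂ ((LinearMap.baseChangeHom ℝ ℂ V V).comp A) with hB
  have hBt : ∀ x y : V, B (1 ⊗ₜ x) (1 ⊗ₜ y) = 1 ⊗ₜ (A x y) := by
    intro x y
    simp [hB, LinearMap.baseChangeHom]
  have key := h j hj B hBt (1 ⊗ₜ x) (1 ⊗ₜ y)
  -- expand
  simp only [LinearMap.sub_apply, LinearMap.add_apply, LinearMap.smul_apply, LinearMap.id_apply,
    LinearMap.baseChange_tmul, map_sub, map_add, map_smul, smul_tmul', smul_eq_mul, mul_one,
    hBt] at key
  have hBt' : ∀ (c d : ℂ) (x y : V), B (c ⊗ₜ x) (d ⊗ₜ y) = (c*d) ⊗ₜ (A x y) := by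
    intro c d x y
    have h1 : c ⊗ₜ[ℝ] x = c • ((1:ℂ) ⊗ₜ[ℝ] x) := by simp [smul_tmul']
    have h2 : d ⊗ₜ[ℝ] y = d • ((1:ℂ) ⊗ₜ[ℝ] y) := by simp [smul_tmul']
    simp only [h1, h2, map_smul, LinearMap.smul_apply, hBt, smul_smul]
    rw [smul_tmul', smul_eq_mul, mul_one, mul_comm]
  simp only [hBt', LinearMap.baseChange_tmul, smul_tmul', smul_eq_mul, mul_one,
    Complex.I_mul_I, one_mul, neg_tmul, neg_neg, map_neg, smul_neg, sub_neg_eq_add,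
    sub_eq_add_neg, neg_add] at key
  have key2 := congrArg (imT V) key
  simp only [map_add, map_neg, map_zero, imT_tmul, Complex.one_im, Complex.I_im, one_smul,
    zero_smul, Complex.neg_im, neg_smul, neg_zero, add_zero, zero_add, map_smul] at key2
  rw [map_add]
  linear_combination (norm := module) key2

lemma mem_spanXY_iff {X Y v : V} :
    v ∈ Submodule.span ℝ (Set.range ![X, Y]) ↔ ∃ a b : ℝ, v = a • X + b • Y := by
  rw [Submodule.mem_span_range_iff_exists_fun]
  constructor
  · rintro ⟨c, hc⟩
    exact ⟨c 0, c 1, by rw [← hc, Fin.sum_univ_two]; simp⟩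
  · rintro ⟨a, b, rfl⟩
    exact ⟨![a, b], by rw [Fin.sum_univ_two]; simp⟩

lemma exists_cstruct' (W : Type*) [AddCommGroup W] [Module ℝ W] [FiniteDimensional ℝ W]
    (r : ℕ) (hr : finrank ℝ W = 2*r) : ∃ k : Module.End ℝ W, k * k = -1 := by
  have h2 : finrank ℝ (Fin r → ℂ) = 2*r := by
    simp [Module.finrank_pi_fintype, Complex.finrank_real_complex, two_mul, mul_comm]
  obtain ⟨e⟩ := FiniteDimensional.nonempty_linearEquiv_of_finrank_eq (hr.trans h2.symm)
  set sI : (Fin r → ℂ) →ₗ[ℝ] (Fin r → ℂ) :=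
    (Complex.I • (LinearMap.id : (Fin r → ℂ) →ₗ[ℂ] (Fin r → ℂ))).restrictScalars ℝ with hsI
  refine ⟨(e.symm.toLinearMap ∘ₗ sI) ∘ₗ e.toLinearMap, ?_⟩
  ext w
  simp [Module.End.mul_eq_comp, hsI, smul_smul, Complex.I_mul_I]

lemma exists_pair [FiniteDimensional ℝ V] (m : ℕ) (hdim : finrank ℝ V = 2*m)
    {X Y : V} (hli : LinearIndependent ℝ ![X, Y]) (t : ℝ) :
    ∃ j₁ j₂ : Module.End ℝ V, j₁*j₁ = -1 ∧ j₂*j₂ = -1 ∧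
      j₁ X = t•X + Y ∧ j₂ X = t•X + Y ∧
      j₁ Y = -((1+t^2)•X) - t•Y ∧ j₂ Y = -((1+t^2)•X) - t•Y ∧
      ∀ v, j₁ v = j₂ v → v ∈ Submodule.span ℝ (Set.range ![X, Y]) := by
  set U := Submodule.span ℝ (Set.range ![X, Y]) with hU
  let b : Basis (Fin 2) ℝ U := Basis.span hli
  have hb0 : (b 0 : V) = X := by
    show (Basis.span hli 0 : V) = X
    rw [Basis.span_apply]; rfl
  have hb1 : (b 1 : V) = Y := by
    show (Basis.span hli 1 : V) = Y
    rw [Basis.span_apply]; rfl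
  set v0 : U := t•(b 0) + b 1 with hv0def
  set v1 : U := -((1+t^2)•(b 0)) - t•(b 1) with hv1def
  set jU : U →ₗ[ℝ] U := b.constr ℝ ![v0, v1] with hjU
  have hjUb0 : jU (b 0) = v0 := by
    rw [hjU]
    simpa using b.constr_basis ℝ ![v0, v1] 0
  have hjUb1 : jU (b 1) = v1 := by
    rw [hjU]
    simpa using b.constr_basis ℝ ![v0, v1] 1
  have hjU20 : jU (jU (b 0)) = -(b 0) := by
    rw [hjUb0, hv0def, map_add, map_smul, hjUb0, hjUb1, hv0def, hv1def]
    module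
  have hjU21 : jU (jU (b 1)) = -(b 1) := by
    rw [hjUb1, hv1def, map_sub, map_neg, map_smul, map_smul, hjUb0, hjUb1, hv0def, hv1def]
    module
  have hjU2 : ∀ u : U, jU (jU u) = -u := by
    have heq : jU ∘ₗ jU = -LinearMap.id := by
      apply b.ext
      intro i
      fin_cases i
      · simpa using hjU20
      · simpa using hjU21
    intro u
    have := congrFun (congrArg (fun f => f.toFun) heq) u
    simpa using this
  obtain ⟨W, hW⟩ := Submodule.exists_isCompl U
  have hrankU : finrank ℝ U = 2 := by
    rw [hU, finrank_span_eq_card hli]; simp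
  have hrankUW : finrank ℝ U + finrank ℝ W = finrank ℝ V :=
    Submodule.finrank_add_eq_of_isCompl hW
  obtain ⟨k, hk⟩ := exists_cstruct' W (m-1) (by omega)
  have hk2 : ∀ w : W, k (k w) = -w := by
    intro w
    have := congrFun (congrArg (fun f => f.toFun) hk) w
    simpa using this
  have hkinj : ∀ w : W, k w = 0 → w = 0 := by
    intro w hw
    have := hk2 w
    rw [hw, map_zero] at this
    simpa using this.symm
  set e := Submodule.prodEquivOfIsCompl U W hW with he
  have heval : ∀ (u : U) (w : W), e (u, w) = (u : V) + (w : V) := fun u w => rfl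
  set f₁ : (U × W) →ₗ[ℝ] (U × W) := jU.prodMap k with hf₁
  set f₂ : (U × W) →ₗ[ℝ] (U × W) := jU.prodMap (-k) with hf₂
  have happly : ∀ (f : (U × W) →ₗ[ℝ] (U × W)) (p : U × W),
      (e.conj f) (e p) = e (f p) := by
    intro f p
    simp [LinearEquiv.conj_apply]
  have hsq : ∀ (f : (U × W) →ₗ[ℝ] (U × W)), (∀ p, f (f p) = -p) →
      (e.conj f) * (e.conj f) = -1 := by
    intro f hf
    ext v
    simp only [Module.End.mul_apply, LinearEquiv.conj_apply, LinearMap.comp_apply,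
      LinearEquiv.coe_coe, LinearEquiv.symm_apply_apply, LinearMap.neg_apply, Module.End.one_apply]
    rw [hf, map_neg, e.apply_symm_apply]
  have hf₁sq : ∀ p : U × W, f₁ (f₁ p) = -p := by
    rintro ⟨u, w⟩; simp [hf₁, hjU2, hk2, Prod.ext_iff]
  have hf₂sq : ∀ p : U × W, f₂ (f₂ p) = -p := by
    rintro ⟨u, w⟩; simp [hf₂, hjU2, hk2, Prod.ext_iff]
  have hXe : e (b 0, 0) = X := by rw [heval]; simp [hb0]
  have hYe : e (b 1, 0) = Y := by rw [heval]; simp [hb1]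
  have hv0coe : ((v0 : U) : V) = t•X + Y := by
    rw [hv0def]; push_cast [hb0, hb1]; rfl
  have hv1coe : ((v1 : U) : V) = -((1+t^2)•X) - t•Y := by
    rw [hv1def]; push_cast [hb0, hb1]; rfl
  have hj₁X : (e.conj f₁ : Module.End ℝ V) X = t•X + Y := by
    calc (e.conj f₁ : Module.End ℝ V) X = (e.conj f₁) (e (b 0, 0)) := by rw [hXe]
    _ = e (f₁ (b 0, 0)) := happly _ _
    _ = e (v0, 0) := by rw [hf₁]; simp [hjUb0]
    _ = t•X + Y := by rw [heval, hv0coe]; simp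
  have hj₂X : (e.conj f₂ : Module.End ℝ V) X = t•X + Y := by
    calc (e.conj f₂ : Module.End ℝ V) X = (e.conj f₂) (e (b 0, 0)) := by rw [hXe]
    _ = e (f₂ (b 0, 0)) := happly _ _
    _ = e (v0, 0) := by rw [hf₂]; simp [hjUb0]
    _ = t•X + Y := by rw [heval, hv0coe]; simp
  have hj₁Y : (e.conj f₁ : Module.End ℝ V) Y = -((1+t^2)•X) - t•Y := by
    calc (e.conj f₁ : Module.End ℝ V) Y = (e.conj f₁) (e (b 1, 0)) := by rw [hYe]
    _ = e (f₁ (b 1, 0)) := happly _ _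
    _ = e (v1, 0) := by rw [hf₁]; simp [hjUb1]
    _ = -((1+t^2)•X) - t•Y := by rw [heval, hv1coe]; simp
  have hj₂Y : (e.conj f₂ : Module.End ℝ V) Y = -((1+t^2)•X) - t•Y := by
    calc (e.conj f₂ : Module.End ℝ V) Y = (e.conj f₂) (e (b 1, 0)) := by rw [hYe]
    _ = e (f₂ (b 1, 0)) := happly _ _
    _ = e (v1, 0) := by rw [hf₂]; simp [hjUb1]
    _ = -((1+t^2)•X) - t•Y := by rw [heval, hv1coe]; simp
  refine ⟨e.conj f₁, e.conj f₂, hsq f₁ hf₁sq, hsq f₂ hf₂sq, hj₁X, hj₂X, hj₁Y, hj₂Y, ?_⟩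
  intro v hv
  obtain ⟨⟨u, w⟩, rfl⟩ := e.surjective v
  rw [happly, happly] at hv
  have hpair := e.injective hv
  have hkw : k w = -(k w) := by
    have := congrArg Prod.snd hpair
    simpa [hf₁, hf₂] using this
  have h2 : (2:ℝ) • (k w) = 0 := by
    rw [two_smul]
    nth_rewrite 1 [hkw]
    simp
  have hw0 : w = 0 := hkinj w (by
    rcases smul_eq_zero.mp h2 with h | h
    · norm_num at h
    · exact h)
  rw [hw0, heval]
  simpa using u.2

lemma mainAB [FiniteDimensional ℝ V] (m : ℕ) (hdim : finrank ℝ V = 2*m)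
    (A : V →ₗ[ℝ] V →ₗ[ℝ] V) (hsym : ∀ X Y : V, A X Y = A Y X)
    (key : ∀ j : Module.End ℝ V, j * j = -1 → ∀ x y : V,
      A (j x) (j y) - A x y = j (A (j x) y + A x (j y)))
    {X Y : V} (hli : LinearIndependent ℝ ![X, Y]) :
    (∃ a b : ℝ, A X Y = a • X + b • Y) ∧ (∃ c : ℝ, A X X = c • X) := by
  set U := Submodule.span ℝ (Set.range ![X, Y]) with hU
  have hQ : ∀ t : ℝ, A (t•X + Y) X ∈ U := by
    intro t
    obtain ⟨j₁, j₂, hs₁, hs₂, hX₁, hX₂, _, _, hdiff⟩ := exists_pair m hdim hli t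
    have e₁ := key j₁ hs₁ X X
    have e₂ := key j₂ hs₂ X X
    rw [hX₁] at e₁
    rw [hX₂] at e₂
    have hSmem := hdiff _ (e₁.symm.trans e₂)
    have hhalf : A (t•X + Y) X = (2:ℝ)⁻¹ • (A (t•X+Y) X + A X (t•X+Y)) := by
      rw [hsym X (t•X+Y)]
      rw [← two_smul ℝ (A (t•X+Y) X), smul_smul]
      norm_num
    rw [hhalf]
    exact U.smul_mem _ hSmem
  have hQY : ∀ t : ℝ, A ((1+t^2)•X + t•Y) Y ∈ U := by
    intro t
    obtain ⟨j₁, j₂, hs₁, hs₂, _, _, hY₁, hY₂, hdiff⟩ := exists_pair m hdim hli t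
    have e₁ := key j₁ hs₁ Y Y
    have e₂ := key j₂ hs₂ Y Y
    rw [hY₁] at e₁
    rw [hY₂] at e₂
    have hSmem := hdiff _ (e₁.symm.trans e₂)
    have hexp : A ((1+t^2)•X + t•Y) Y
        = (-(2:ℝ)⁻¹) • (A (-((1+t^2)•X) - t•Y) Y + A Y (-((1+t^2)•X) - t•Y)) := by
      rw [hsym Y (-((1+t^2)•X) - t•Y)]
      simp only [map_add, map_sub, map_neg, map_smul, LinearMap.add_apply, LinearMap.sub_apply,
        LinearMap.neg_apply, LinearMap.smul_apply]
      match_scalars <;> ring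
    rw [hexp]
    exact U.smul_mem _ hSmem
  have mAYX : A Y X ∈ U := by
    have := hQ 0
    simpa using this
  have mAXY : A X Y ∈ U := by rw [hsym X Y]; exact mAYX
  have mAXX : A X X ∈ U := by
    have h1 := hQ 1
    have hh : A ((1:ℝ)•X + Y) X = A X X + A Y X := by
      simp only [map_add, map_smul, LinearMap.add_apply, LinearMap.smul_apply, one_smul]
    rw [hh] at h1
    have := U.sub_mem h1 mAYX
    simpa using this
  have mAYY : A Y Y ∈ U := by
    have h1 := hQY 1
    have hh : A ((1+(1:ℝ)^2)•X + (1:ℝ)•Y) Y = (2:ℝ) • A X Y + A Y Y := by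
      simp only [map_add, map_smul, LinearMap.add_apply, LinearMap.smul_apply]
      match_scalars <;> ring
    rw [hh] at h1
    have := U.sub_mem h1 (U.smul_mem 2 mAXY)
    simpa using this
  obtain ⟨r, s, hr⟩ := mem_spanXY_iff.mp mAXX
  obtain ⟨p, q, hp⟩ := mem_spanXY_iff.mp mAXY
  obtain ⟨u, v, hu⟩ := mem_spanXY_iff.mp mAYY
  refine ⟨⟨p, q, hp⟩, ?_⟩
  -- now derive s = 0 from the t-identities
  have Ecoef : ∀ t : ℝ, (v - s - 2*p) + (4*q - 2*r)*t + 3*s*t^2 = 0 := by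
    intro t
    obtain ⟨j₁, j₂, hs₁, hs₂, hX₁, hX₂, hY₁, hY₂, hdiff⟩ := exists_pair m hdim hli t
    have e := key j₁ hs₁ X X
    rw [hX₁] at e
    simp only [map_add, map_smul, LinearMap.add_apply, LinearMap.smul_apply] at e
    rw [hsym Y X] at e
    rw [hr, hp, hu] at e
    simp only [map_add, map_smul, smul_add, hX₁, hY₁] at e
    have Et : ((u - r + 2*q) + 2*s*t + (2*q - r)*t^2 + 2*s*t^3) • X
        + ((v - s - 2*p) + (4*q - 2*r)*t + 3*s*t^2) • Y = 0 := by
      linear_combination (norm := module) e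
    exact ((LinearIndependent.pair_iff.mp hli) _ _ Et).2
  have hs0 : s = 0 := by
    have h0 := Ecoef 0
    have h1 := Ecoef 1
    have h2 := Ecoef (-1)
    nlinarith [h0, h1, h2]
  exact ⟨r, by rw [hr, hs0]; simp⟩

lemma indep_pair_of_notMem {X Y : V} (hX : X ≠ 0) (hY : Y ∉ Submodule.span ℝ {X}) :
    LinearIndependent ℝ ![X, Y] := by
  rw [LinearIndependent.pair_iff]
  intro s t hst
  by_cases ht : t = 0
  · subst ht
    simp only [zero_smul, add_zero] at hst
    rcases smul_eq_zero.mp hst with h | h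
    · exact ⟨h, rfl⟩
    · exact absurd h hX
  · exfalso
    apply hY
    rw [Submodule.mem_span_singleton]
    refine ⟨-t⁻¹ * s, ?_⟩
    have : Y = (-t⁻¹ * s) • X := by
      have h2 : t • Y = -(s • X) := by
        linear_combination (norm := module) hst
      have := congrArg (fun z => t⁻¹ • z) h2
      simp only [smul_smul, inv_mul_cancel₀ ht, one_smul] at this
      rw [this]
      match_scalars; ring
    exact this.symm

lemma exists_notMem_span [FiniteDimensional ℝ V] (hdim : 2 ≤ finrank ℝ V) (X : V) :
    ∃ Y : V, Y ∉ Submodule.span ℝ {X} := by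
  by_contra hcon
  push_neg at hcon
  have htop : Submodule.span ℝ {X} = ⊤ := by
    rw [Submodule.eq_top_iff']; exact hcon
  have : finrank ℝ (Submodule.span ℝ {X}) = finrank ℝ V := by
    rw [htop]; exact finrank_top ℝ V
  by_cases hX : X = 0
  · subst hX
    rw [Submodule.span_singleton_eq_bot.mpr rfl] at this
    simp at this
    omega
  · rw [finrank_span_singleton hX] at this
    omega

lemma exists_scalar {M : Type*} [AddCommGroup M] [Module ℝ M] (f : M →ₗ[ℝ] M)
    (h : ∀ v, ∃ c : ℝ, f v = c • v) : ∃ c : ℝ, ∀ v, f v = c • v := by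
  by_cases htriv : ∀ v : M, v = 0
  · exact ⟨0, fun v => by rw [htriv v]; simp⟩
  push_neg at htriv
  obtain ⟨v₀, hv₀⟩ := htriv
  obtain ⟨c, hc⟩ := h v₀
  refine ⟨c, fun v => ?_⟩
  by_cases hmem : v ∈ Submodule.span ℝ {v₀}
  · obtain ⟨a, rfl⟩ := Submodule.mem_span_singleton.mp hmem
    rw [map_smul, hc, smul_smul, smul_smul, mul_comm]
  · obtain ⟨d, hd⟩ := h v
    obtain ⟨e0, he⟩ := h (v₀ + v)
    have hsum : c • v₀ + d • v = e0 • (v₀ + v) := by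
      rw [← hc, ← hd, ← map_add, he]
    have key : (c - e0) • v₀ + (d - e0) • v = 0 := by
      linear_combination (norm := module) hsum
    by_cases hde : d - e0 = 0
    · have h2 : (c - e0) • v₀ = 0 := by
        rw [hde, zero_smul, add_zero] at key; exact key
      rcases smul_eq_zero.mp h2 with h3 | h3
      · have hce : c = e0 := by linarith [sub_eq_zero.mp h3]
        have hdc : d = c := by rw [hce]; linarith [sub_eq_zero.mp hde]
        rw [hd, hdc]
      · exact absurd h3 hv₀
    · exfalso
      apply hmem
      rw [Submodule.mem_span_singleton]
      refine ⟨-(d - e0)⁻¹ * (c - e0), ?_⟩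
      have h2 : (d - e0) • v = -((c - e0) • v₀) := by
        linear_combination (norm := module) key
      have := congrArg (fun z => (d - e0)⁻¹ • z) h2
      simp only [smul_smul, inv_mul_cancel₀ hde, one_smul] at this
      rw [this]
      match_scalars; ring

lemma final_lemma [FiniteDimensional ℝ V] (hdim : 2 ≤ finrank ℝ V)
    (A : V →ₗ[ℝ] V →ₗ[ℝ] V) (hsym : ∀ X Y : V, A X Y = A Y X)
    (hXX : ∀ X : V, ∃ c : ℝ, A X X = c • X)
    (hXY : ∀ X Y : V, ∃ a b : ℝ, A X Y = a • X + b • Y) :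
    ∃ α : V →ₗ[ℝ] ℝ, ∀ X Y : V, A X Y = α X • Y + α Y • X := by
  have hrep : ∀ X : V, X ≠ 0 → ∃ (c : ℝ) (θ : V →ₗ[ℝ] ℝ), ∀ Y, A X Y = c • Y + θ Y • X := by
    intro X hX
    set p := Submodule.span ℝ {X} with hp
    have hXp : X ∈ p := Submodule.mem_span_singleton_self X
    have hle : p ≤ p.comap (A X) := by
      rw [hp, Submodule.span_le, Set.singleton_subset_iff]
      obtain ⟨d, hd⟩ := hXX X
      have : A X X ∈ Submodule.span ℝ {X} := by
        rw [hd]; exact Submodule.smul_mem _ d (Submodule.mem_span_singleton_self X)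
      exact this
    set T := Submodule.mapQ p p (A X) hle with hT
    have heig : ∀ z : V ⧸ p, ∃ c : ℝ, T z = c • z := by
      intro z
      obtain ⟨Y, rfl⟩ := Submodule.Quotient.mk_surjective p z
      obtain ⟨a, b, hab⟩ := hXY X Y
      refine ⟨b, ?_⟩
      rw [hT, Submodule.mapQ_apply, hab]
      have : Submodule.Quotient.mk (p := p) (a • X + b • Y)
          = a • Submodule.Quotient.mk (p := p) X + b • Submodule.Quotient.mk (p := p) Y := by
        rfl
      rw [this, (Submodule.Quotient.mk_eq_zero p).mpr hXp]
      simp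
    obtain ⟨c, hc⟩ := exists_scalar T heig
    have hker : ∀ Y : V, A X Y - c • Y ∈ p := by
      intro Y
      have := hc (Submodule.Quotient.mk Y)
      rw [hT, Submodule.mapQ_apply] at this
      rw [← Submodule.Quotient.mk_eq_zero p]
      have h2 : Submodule.Quotient.mk (p := p) (A X Y - c • Y)
          = Submodule.Quotient.mk (p := p) (A X Y) - c • Submodule.Quotient.mk (p := p) Y := rfl
      rw [h2, this, sub_self]
    obtain ⟨C, hC⟩ := Submodule.exists_isCompl p
    set π := p.linearProjOfIsCompl C hC with hπ
    set ε := (LinearEquiv.toSpanNonzeroSingleton ℝ V X hX).symm with hε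
    set φ : V →ₗ[ℝ] ℝ := ε.toLinearMap ∘ₗ π with hφ
    have hφX : ∀ a : ℝ, φ (a • X) = a := by
      intro a
      have hmem : a • X ∈ p := p.smul_mem a hXp
      have h1 : π (a • X) = ⟨a • X, hmem⟩ := by
        rw [hπ]
        exact Submodule.linearProjOfIsCompl_apply_left hC ⟨a • X, hmem⟩
      rw [hφ]
      simp only [LinearMap.comp_apply, h1]
      rw [hε, LinearEquiv.coe_coe, LinearEquiv.symm_apply_eq]
      apply Subtype.ext
      simp [LinearEquiv.toSpanNonzeroSingleton]
    refine ⟨c, φ ∘ₗ (A X - c • (LinearMap.id : V →ₗ[ℝ] V)), fun Y => ?_⟩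
    obtain ⟨a, ha⟩ := Submodule.mem_span_singleton.mp (hker Y)
    have h3 : A X Y - c • Y = a • X := ha.symm
    have h4 : φ ((A X - c • (LinearMap.id : V →ₗ[ℝ] V)) Y) = a := by
      have : (A X - c • (LinearMap.id : V →ₗ[ℝ] V)) Y = a • X := by
        simpa using h3
      rw [this, hφX]
    simp only [LinearMap.comp_apply, h4]
    rw [← h3]
    abel
  choose c θ hcθ using hrep
  -- symmetry relations
  have hsymrel : ∀ (X Y : V) (hX : X ≠ 0) (hY : Y ≠ 0),
      LinearIndependent ℝ ![X, Y] → θ X hX Y = c Y hY ∧ c X hX = θ Y hY X := by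
    intro X Y hX hY hli
    have h1 := hcθ X hX Y
    have h2 := hcθ Y hY X
    rw [hsym X Y] at h1
    have h3 : (θ X hX Y - c Y hY) • X + (c X hX - θ Y hY X) • Y = 0 := by
      have := h1.symm.trans h2
      linear_combination (norm := module) this
    obtain ⟨e1, e2⟩ := (LinearIndependent.pair_iff.mp hli) _ _ h3
    constructor
    · linarith [sub_eq_zero.mp e1]
    · linarith [sub_eq_zero.mp e2]
  -- patching: θ is independent of base point for independent pairs
  have hpatch : ∀ (X₀ X₁ : V) (h0 : X₀ ≠ 0) (h1 : X₁ ≠ 0),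
      LinearIndependent ℝ ![X₀, X₁] → θ X₀ h0 = θ X₁ h1 := by
    intro X₀ X₁ h0 h1 hli
    have hagree : ∀ w : V, w ∉ Submodule.span ℝ {X₀} → w ∉ Submodule.span ℝ {X₁} →
        θ X₀ h0 w = θ X₁ h1 w := by
      intro w hw0 hw1
      have hwne : w ≠ 0 := fun h => hw0 (h ▸ Submodule.zero_mem _)
      have hli0 : LinearIndependent ℝ ![X₀, w] := indep_pair_of_notMem h0 hw0
      have hli1 : LinearIndependent ℝ ![X₁, w] := indep_pair_of_notMem h1 hw1
      rw [(hsymrel X₀ w h0 hwne hli0).1, (hsymrel X₁ w h1 hwne hli1).1]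
    apply LinearMap.ext
    intro v
    by_cases hv0 : v ∈ Submodule.span ℝ {X₀}
    · obtain ⟨a, rfl⟩ := Submodule.mem_span_singleton.mp hv0
      by_cases ha : a = 0
      · subst ha; simp
      · have hnot0 : ∀ (b : ℝ), (b ≠ 0) → b • X₀ + X₁ ∉ Submodule.span ℝ {X₀} := by
          intro b hb hmem
          have : X₁ ∈ Submodule.span ℝ {X₀} := by
            have h2 : X₁ = (b • X₀ + X₁) - b • X₀ := by abel
            rw [h2]
            exact Submodule.sub_mem _ hmem (Submodule.smul_mem _ b (Submodule.mem_span_singleton_self X₀))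
          -- X₁ ∈ span X₀ contradicts independence
          obtain ⟨k, hk⟩ := Submodule.mem_span_singleton.mp this
          have := (LinearIndependent.pair_iff.mp hli) k (-1) (by rw [← hk]; module)
          norm_num at this
        have hnot1 : ∀ (b : ℝ), (b ≠ 0) → b • X₀ + X₁ ∉ Submodule.span ℝ {X₁} := by
          intro b hb hmem
          have : b • X₀ ∈ Submodule.span ℝ {X₁} := by
            have h2 : b • X₀ = (b • X₀ + X₁) - X₁ := by abel
            rw [h2]
            exact Submodule.sub_mem _ hmem (Submodule.mem_span_singleton_self X₁)
          obtain ⟨k, hk⟩ := Submodule.mem_span_singleton.mp this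
          have := (LinearIndependent.pair_iff.mp hli) b (-k) (by rw [← hk]; module)
          exact hb this.1
        have hw0 : a • X₀ + X₁ ∉ Submodule.span ℝ {X₀} := hnot0 a ha
        have hw1 : a • X₀ + X₁ ∉ Submodule.span ℝ {X₁} := hnot1 a ha
        have heq2 : a • X₀ + (a • X₀ + X₁) = (2*a) • X₀ + X₁ := by module
        have hvw0 : a • X₀ + (a • X₀ + X₁) ∉ Submodule.span ℝ {X₀} := by
          rw [heq2]; exact hnot0 (2*a) (by simpa using ha)
        have hvw1 : a • X₀ + (a • X₀ + X₁) ∉ Submodule.span ℝ {X₁} := by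
          rw [heq2]; exact hnot1 (2*a) (by simpa using ha)
        have e1 := hagree (a • X₀ + X₁) hw0 hw1
        have e2 := hagree (a • X₀ + (a • X₀ + X₁)) hvw0 hvw1
        have hlin0 : θ X₀ h0 (a • X₀) = θ X₀ h0 (a • X₀ + (a • X₀ + X₁)) - θ X₀ h0 (a • X₀ + X₁) := by
          rw [map_add]; ring
        have hlin1 : θ X₁ h1 (a • X₀) = θ X₁ h1 (a • X₀ + (a • X₀ + X₁)) - θ X₁ h1 (a • X₀ + X₁) := by
          rw [map_add]; ring
        rw [hlin0, hlin1, e1, e2]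
    · by_cases hv1 : v ∈ Submodule.span ℝ {X₁}
      · obtain ⟨a, rfl⟩ := Submodule.mem_span_singleton.mp hv1
        by_cases ha : a = 0
        · subst ha; simp
        · have hnot0 : ∀ (b : ℝ), (b ≠ 0) → b • X₁ + X₀ ∉ Submodule.span ℝ {X₁} := by
            intro b hb hmem
            have : X₀ ∈ Submodule.span ℝ {X₁} := by
              have h2 : X₀ = (b • X₁ + X₀) - b • X₁ := by abel
              rw [h2]
              exact Submodule.sub_mem _ hmem (Submodule.smul_mem _ b (Submodule.mem_span_singleton_self X₁))
            obtain ⟨k, hk⟩ := Submodule.mem_span_singleton.mp this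
            have := (LinearIndependent.pair_iff.mp hli) (-1) k (by rw [← hk]; module)
            norm_num at this
          have hnot1 : ∀ (b : ℝ), (b ≠ 0) → b • X₁ + X₀ ∉ Submodule.span ℝ {X₀} := by
            intro b hb hmem
            have : b • X₁ ∈ Submodule.span ℝ {X₀} := by
              have h2 : b • X₁ = (b • X₁ + X₀) - X₀ := by abel
              rw [h2]
              exact Submodule.sub_mem _ hmem (Submodule.mem_span_singleton_self X₀)
            obtain ⟨k, hk⟩ := Submodule.mem_span_singleton.mp this
            have := (LinearIndependent.pair_iff.mp hli) (-k) b (by rw [← hk]; module)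
            exact hb this.2
          have hw0 : a • X₁ + X₀ ∉ Submodule.span ℝ {X₁} := hnot0 a ha
          have hw1 : a • X₁ + X₀ ∉ Submodule.span ℝ {X₀} := hnot1 a ha
          have heq2 : a • X₁ + (a • X₁ + X₀) = (2*a) • X₁ + X₀ := by module
          have hvw0 : a • X₁ + (a • X₁ + X₀) ∉ Submodule.span ℝ {X₁} := by
            rw [heq2]; exact hnot0 (2*a) (by simpa using ha)
          have hvw1 : a • X₁ + (a • X₁ + X₀) ∉ Submodule.span ℝ {X₀} := by
            rw [heq2]; exact hnot1 (2*a) (by simpa using ha)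
          have e1 := hagree (a • X₁ + X₀) hw1 hw0
          have e2 := hagree (a • X₁ + (a • X₁ + X₀)) hvw1 hvw0
          have hlin0 : θ X₀ h0 (a • X₁) = θ X₀ h0 (a • X₁ + (a • X₁ + X₀)) - θ X₀ h0 (a • X₁ + X₀) := by
            rw [map_add]; ring
          have hlin1 : θ X₁ h1 (a • X₁) = θ X₁ h1 (a • X₁ + (a • X₁ + X₀)) - θ X₁ h1 (a • X₁ + X₀) := by
            rw [map_add]; ring
          rw [hlin0, hlin1, e1, e2]
      · exact hagree v hv0 hv1
  -- choose base point
  have : Nontrivial V := Module.nontrivial_of_finrank_pos (R := ℝ) (M := V) (by omega)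
  obtain ⟨X₀, hX₀⟩ := exists_ne (0 : V)
  set α := θ X₀ hX₀ with hα
  have hθall : ∀ (X : V) (hX : X ≠ 0), θ X hX = α := by
    intro X hX
    by_cases hli : LinearIndependent ℝ ![X₀, X]
    · rw [hα]
      exact (hpatch X₀ X hX₀ hX hli).symm
    · -- X ∈ span X₀
      obtain ⟨Y, hY⟩ := exists_notMem_span hdim X₀
      have hYne : Y ≠ 0 := fun h => hY (h ▸ Submodule.zero_mem _)
      have hliY : LinearIndependent ℝ ![X₀, Y] := indep_pair_of_notMem hX₀ hY
      -- X dependent on X₀ : X = k • X₀ with k ≠ 0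
      have hXmem : X ∈ Submodule.span ℝ {X₀} := by
        by_contra hmm
        exact hli (indep_pair_of_notMem hX₀ hmm)
      obtain ⟨k, hk⟩ := Submodule.mem_span_singleton.mp hXmem
      have hkne : k ≠ 0 := by
        rintro rfl
        simp at hk
        exact hX hk.symm
      have hliXY : LinearIndependent ℝ ![X, Y] := by
        apply indep_pair_of_notMem hX
        intro hmem
        apply hY
        have : Y ∈ Submodule.span ℝ {X} := hmem
        obtain ⟨l, hl⟩ := Submodule.mem_span_singleton.mp this
        rw [Submodule.mem_span_singleton]
        exact ⟨l * k, by rw [← hl, ← hk, smul_smul]⟩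
      have e1 : θ X hX = θ Y hYne := hpatch X Y hX hYne hliXY
      have e2 : θ X₀ hX₀ = θ Y hYne := hpatch X₀ Y hX₀ hYne hliY
      rw [e1, hα, e2]
  have hcall : ∀ (X : V) (hX : X ≠ 0), c X hX = α X := by
    intro X hX
    obtain ⟨Y, hY⟩ := exists_notMem_span hdim X
    have hYne : Y ≠ 0 := fun h => hY (h ▸ Submodule.zero_mem _)
    have hli : LinearIndependent ℝ ![X, Y] := indep_pair_of_notMem hX hY
    have := (hsymrel X Y hX hYne hli).2
    rw [this, hθall Y hYne]
  refine ⟨α, fun X Y => ?_⟩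
  by_cases hX : X = 0
  · subst hX; simp
  by_cases hY : Y = 0
  · subst hY; simp
  · rw [hcθ X hX Y, hcall X hX, hθall X hX]

end TwistorHelpers

/-- Let `V` be real of even dimension `n = 2m ≥ 2` and `A : V × V → V` a symmetric
bilinear map. If for every complex structure `j` on `V` the complex-bilinear extension
`A_ℂ` of `A` to the complexification `V_ℂ = ℂ ⊗ℝ V` satisfies
`(j_ℂ + i)(A_ℂ((j_ℂ − i)X, (j_ℂ − i)Y)) = 0` for all `X, Y ∈ V_ℂ` (i.e. `A` has no
component in the `3i`-eigenspace of the derivation action of any `j`), then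
`A(X,Y) = α(X)Y + α(Y)X` for some `α ∈ V*`. -/
theorem same_twistor_implies_projective {V : Type*} [AddCommGroup V] [Module ℝ V]
    [FiniteDimensional ℝ V]
    (m : ℕ) (hm : 1 ≤ m) (hdim : Module.finrank ℝ V = 2 * m)
    (A : V →ₗ[ℝ] V →ₗ[ℝ] V) (hsym : ∀ X Y : V, A X Y = A Y X)
    (h : ∀ j : Module.End ℝ V, j * j = -1 →
      ∀ B : (ℂ ⊗[ℝ] V) →ₗ[ℂ] (ℂ ⊗[ℝ] V) →ₗ[ℂ] (ℂ ⊗[ℝ] V),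
        (∀ x y : V, B (1 ⊗ₜ x) (1 ⊗ₜ y) = 1 ⊗ₜ (A x y)) →
        ∀ X Y : ℂ ⊗[ℝ] V,
          (j.baseChange ℂ + Complex.I • (LinearMap.id : (ℂ ⊗[ℝ] V) →ₗ[ℂ] (ℂ ⊗[ℝ] V)))
            (B ((j.baseChange ℂ - Complex.I • (LinearMap.id : (ℂ ⊗[ℝ] V) →ₗ[ℂ] (ℂ ⊗[ℝ] V))) X)
               ((j.baseChange ℂ - Complex.I • (LinearMap.id : (ℂ ⊗[ℝ] V) →ₗ[ℂ] (ℂ ⊗[ℝ] V))) Y)) = 0) :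
    ∃ α : V →ₗ[ℝ] ℝ, ∀ X Y : V, A X Y = α X • Y + α Y • X := by
  have key := key_identity A h
  have hdim2 : 2 ≤ finrank ℝ V := by omega
  have hXX : ∀ X : V, ∃ c : ℝ, A X X = c • X := by
    intro X
    by_cases hX : X = 0
    · exact ⟨0, by subst hX; simp⟩
    · obtain ⟨Y, hY⟩ := exists_notMem_span hdim2 X
      have hli := indep_pair_of_notMem hX hY
      exact (mainAB m hdim A hsym key hli).2
  have hXY : ∀ X Y : V, ∃ a b : ℝ, A X Y = a • X + b • Y := by
    intro X Y
    by_cases hli : LinearIndependent ℝ ![X, Y]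
    · exact (mainAB m hdim A hsym key hli).1
    · by_cases hX : X = 0
      · exact ⟨0, 0, by subst hX; simp⟩
      · have hYmem : Y ∈ Submodule.span ℝ {X} := by
          by_contra hmm
          exact hli (indep_pair_of_notMem hX hmm)
        obtain ⟨k, hk⟩ := Submodule.mem_span_singleton.mp hYmem
        obtain ⟨d, hd⟩ := hXX X
        refine ⟨k * d, 0, ?_⟩
        rw [← hk, map_smul, hd]
        match_scalars
        ring
  exact final_lemma hdim2 A hsym hXX hXY
end
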